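/- Let f(w) = w/(b(1+aw)) and g(w) = bw + c with b ≠ 0, |a| < 1, |c/b| < 1. Then the contour integrals t_n := (1/(2πi n)) ∮_{S¹} g(w)^{−n}/f(w) · g'(w) dw vanish for all n ≥ 2, and t₁ := (1/(2πi)) ∮_{S¹} g(w)^{−1}/f(w) · g'(w) dw = ab. -/

import Mathlib

/-!
On the circle, `1/f(w) · g'(w) · g(w)^{-n} = b^{2-n} (a + w⁻¹) (w + c/b)^{-n}`. The term
`a (w + c/b)^{-n}` integrates to `2πi a` for `n = 1` and to `0` for `n ≥ 2`. The term
`w⁻¹ (w + c/b)^{-n}` has both of its poles `0` and `-c/b` inside the circle, so its integral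
vanishes: the partial fraction `(z-p)⁻¹(z-q)^{-(n+1)} = (p-q)⁻¹((z-p)⁻¹(z-q)^{-n} - (z-q)^{-(n+1)})`
reduces it, by induction on `n`, to `∮ (z-p)⁻¹ = ∮ (z-q)⁻¹ = 2πi`.
-/

open Complex Metric Set

section CircleIntegral

variable {c p q : ℂ} {R : ℝ}

lemma sub_ne_zero_of_mem_sphere_of_mem_ball {z : ℂ} (hz : z ∈ sphere c R) (hp : p ∈ ball c R) :
    z - p ≠ 0 :=
  sub_ne_zero.2 fun h => sphere_disjoint_ball.ne_of_mem hz hp h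

lemma circleIntegrable_sub_zpow_of_mem_ball (hp : p ∈ ball c R) (n : ℤ) :
    CircleIntegrable (fun z => (z - p) ^ n) c R := by
  rw [circleIntegrable_sub_zpow_iff, abs_of_pos (pos_of_mem_ball hp)]
  exact Or.inr (Or.inr fun h => sphere_disjoint_ball.ne_of_mem h hp rfl)

lemma circleIntegrable_inv_sub_mul_sub_zpow (hp : p ∈ ball c R) (hq : q ∈ ball c R) (n : ℤ) :
    CircleIntegrable (fun z => (z - p)⁻¹ * (z - q) ^ n) c R := by
  refine ContinuousOn.circleIntegrable (pos_of_mem_ball hp).le ?_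
  exact ((continuousOn_id.sub continuousOn_const).inv₀
      fun z hz => sub_ne_zero_of_mem_sphere_of_mem_ball hz hp).mul
    ((continuousOn_id.sub continuousOn_const).zpow₀ n
      fun z hz => Or.inl (sub_ne_zero_of_mem_sphere_of_mem_ball hz hq))

lemma circleIntegral_inv_sub_mul_sub_zpow_neg_succ (hp : p ∈ ball c R) (hq : q ∈ ball c R)
    (hpq : p ≠ q) (n : ℕ) :
    (∮ z in C(c, R), (z - p)⁻¹ * (z - q) ^ (-((n + 1 : ℕ) : ℤ))) =
      (p - q)⁻¹ * ((∮ z in C(c, R), (z - p)⁻¹ * (z - q) ^ (-(n : ℤ))) -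
        ∮ z in C(c, R), (z - q) ^ (-((n + 1 : ℕ) : ℤ))) := by
  have hfrac : EqOn (fun z => (z - p)⁻¹ * (z - q) ^ (-((n + 1 : ℕ) : ℤ)))
      (fun z => (p - q)⁻¹ * ((z - p)⁻¹ * (z - q) ^ (-(n : ℤ)) - (z - q) ^ (-((n + 1 : ℕ) : ℤ))))
      (sphere c R) := by
    intro z hz
    have hzp := sub_ne_zero_of_mem_sphere_of_mem_ball hz hp
    have hzq := sub_ne_zero_of_mem_sphere_of_mem_ball hz hq
    have hpq' : p - q ≠ 0 := sub_ne_zero.2 hpq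
    simp only [zpow_neg, zpow_natCast, pow_succ]
    field_simp
    ring
  rw [circleIntegral.integral_congr (pos_of_mem_ball hp).le hfrac,
    circleIntegral.integral_const_mul, circleIntegral.integral_sub
      (circleIntegrable_inv_sub_mul_sub_zpow hp hq _) (circleIntegrable_sub_zpow_of_mem_ball hq _)]

theorem circleIntegral_inv_sub_mul_sub_zpow_neg (hp : p ∈ ball c R) (hq : q ∈ ball c R) {n : ℕ}
    (hn : 1 ≤ n) : (∮ z in C(c, R), (z - p)⁻¹ * (z - q) ^ (-(n : ℤ))) = 0 := by
  by_cases hpq : p = q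
  · subst hpq
    have hpow : EqOn (fun z => (z - p)⁻¹ * (z - p) ^ (-(n : ℤ))) (fun z => (z - p) ^ (-(n + 1 : ℤ)))
        (sphere c R) := by
      intro z hz
      simp only [← zpow_neg_one, ← zpow_add₀ (sub_ne_zero_of_mem_sphere_of_mem_ball hz hp)]
      ring_nf
    rw [circleIntegral.integral_congr (pos_of_mem_ball hp).le hpow,
      circleIntegral.integral_sub_zpow_of_ne (by omega)]
  obtain ⟨m, rfl⟩ := Nat.exists_eq_add_of_le' hn
  induction m with
  | zero =>
    rw [circleIntegral_inv_sub_mul_sub_zpow_neg_succ hp hq hpq]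
    simp only [Nat.cast_zero, neg_zero, zpow_zero, mul_one, zero_add, Nat.cast_one,
      zpow_neg_one, circleIntegral.integral_sub_inv_of_mem_ball hp,
      circleIntegral.integral_sub_inv_of_mem_ball hq, sub_self, mul_zero]
  | succ m ih =>
    rw [circleIntegral_inv_sub_mul_sub_zpow_neg_succ hp hq hpq, ih (by omega),
      circleIntegral.integral_sub_zpow_of_ne (by omega), sub_self, mul_zero]

end CircleIntegral

section Mobius

variable {a b c : ℂ}

lemma mobius_integrand_eq (hb : b ≠ 0) (n : ℤ) {w : ℂ} (hw : w ≠ 0) :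
    (b * w + c) ^ n * (b * (1 + a * w) / w) * b =
      b ^ 2 * b ^ n * (a * (w - -(c / b)) ^ n + (w - 0)⁻¹ * (w - -(c / b)) ^ n) := by
  have hbw : b * w + c = b * (w - -(c / b)) := by field_simp; ring
  rw [hbw, mul_zpow]
  field_simp
  ring

theorem circleIntegral_mobius_integrand (hb : b ≠ 0) {R : ℝ} (hc : ‖c / b‖ < R) {n : ℕ}
    (hn : 1 ≤ n) :
    (∮ w in C(0, R), (b * w + c) ^ (-(n : ℤ)) * (b * (1 + a * w) / w) * b) =
      b ^ 2 * b ^ (-(n : ℤ)) * a * ∮ w in C(0, R), (w - -(c / b)) ^ (-(n : ℤ)) := by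
  have hq : -(c / b) ∈ ball (0 : ℂ) R := by rwa [mem_ball_zero_iff, norm_neg]
  have hR : 0 < R := pos_of_mem_ball hq
  have h0 : (0 : ℂ) ∈ ball (0 : ℂ) R := mem_ball_self hR
  have hsplit : EqOn (fun w => (b * w + c) ^ (-(n : ℤ)) * (b * (1 + a * w) / w) * b)
      (fun w => b ^ 2 * b ^ (-(n : ℤ)) *
        (a * (w - -(c / b)) ^ (-(n : ℤ)) + (w - 0)⁻¹ * (w - -(c / b)) ^ (-(n : ℤ))))
      (sphere 0 R) := fun w hw =>
    mobius_integrand_eq hb _ (ne_of_mem_sphere hw hR.ne')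
  have hpole : CircleIntegrable (fun w => a * (w - -(c / b)) ^ (-(n : ℤ))) 0 R :=
    (circleIntegrable_sub_zpow_of_mem_ball hq _).const_smul
  rw [circleIntegral.integral_congr hR.le hsplit, circleIntegral.integral_const_mul,
    circleIntegral.integral_add hpole (circleIntegrable_inv_sub_mul_sub_zpow h0 hq _),
    circleIntegral_inv_sub_mul_sub_zpow_neg h0 hq hn, circleIntegral.integral_const_mul]
  ring

end Mobius

theorem mobius_times_vanish_general
    (a b c : ℂ) (hb : b ≠ 0) (hc : ‖c / b‖ < 1) :
    (∀ n : ℕ, 2 ≤ n →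
      (2 * Real.pi * Complex.I * n)⁻¹ *
        (∮ w in C(0, 1), (b * w + c) ^ (-(n : ℤ)) * (b * (1 + a * w) / w) * b) = 0) ∧
    (2 * Real.pi * Complex.I)⁻¹ *
        (∮ w in C(0, 1), (b * w + c)⁻¹ * (b * (1 + a * w) / w) * b) = a * b := by
  refine ⟨fun n hn => ?_, ?_⟩
  · rw [circleIntegral_mobius_integrand hb hc (by omega),
      circleIntegral.integral_sub_zpow_of_ne (by omega), mul_zero, mul_zero]
  · have ht₁ := circleIntegral_mobius_integrand (a := a) hb hc le_rfl
    simp only [Nat.cast_one, zpow_neg_one] at ht₁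
    have hq : -(c / b) ∈ ball (0 : ℂ) 1 := by rwa [mem_ball_zero_iff, norm_neg]
    rw [ht₁, circleIntegral.integral_sub_inv_of_mem_ball hq]
    field_simp

/-- For the Möbius pair `f(w) = w/(b(1+aw))`, `g(w) = bw + c` (so `1/f(w) = b(1+aw)/w`
and `g'(w) = b`), the time variables `t_n = (1/(2πin)) ∮ g(w)^{−n}/f(w) · g'(w) dw`
vanish for `n ≥ 2`, and `t₁ = ab`. -/
theorem mobius_times_vanish
    (a b c : ℂ) (hb : b ≠ 0) (ha : ‖a‖ < 1) (hc : ‖c / b‖ < 1) :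
    (∀ n : ℕ, 2 ≤ n →
      (2 * Real.pi * Complex.I * n)⁻¹ *
        (∮ w in C(0, 1), (b * w + c) ^ (-(n : ℤ)) * (b * (1 + a * w) / w) * b) = 0) ∧
    (2 * Real.pi * Complex.I)⁻¹ *
        (∮ w in C(0, 1), (b * w + c)⁻¹ * (b * (1 + a * w) / w) * b) = a * b :=
  mobius_times_vanish_general a b c hb hc
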